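/- arXiv:2101.07331 — 4 statements merged into one kernel-verified Lean document; each statement's English description precedes it below -/
import Mathlib

section
/- Suppose $\phi$ and $\psi$ are real-valued $C^2$ functions on $[z_1,z_2]$ satisfying $-(p\phi')' + q\phi = \lambda r \phi$ and $-(p\psi')' + q\psi = \mu r \psi$ with $\lambda \neq \mu$, both satisfying the $\lambda$-independent boundary condition $a_1\phi(z_1) - b_1 (p\phi')(z_1) = 0$ (and similarly for $\psi$) at $z_1$, and the eigenvalue-dependent boundary condition $-[a_2\phi(z_2) - b_2(p\phi')(z_2)] = \lambda[c_2\phi(z_2) - d_2(p\phi')(z_2)]$ at $z_2$ (with eigenvalue $\mu$ for $\psi$). Let $D_2 = -(a_2 d_2 - b_2 c_2) \neq 0$. Then the orthogonality relation $\int_{z_1}^{z_2}\phi\,\psi\, r\, dz + D_2^{-1}[c_2\phi(z_2)-d_2(p\phi')(z_2)][c_2\psi(z_2)-d_2(p\psi')(z_2)] = 0$ holds. -/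
open MeasureTheory Set

/-!
Green's formula for `L u = -(p u')' + q u` gives
`(μ - λ) ∫ φ ψ r = [p (φ' ψ - ψ' φ)]_{z₁}^{z₂}`. The bracket vanishes at `z₁`, where the
vectors `(φ, p φ')` and `(ψ, p ψ')` both lie on the line `a₁ x = b₁ y`. At `z₂` the two
eigenvalue-dependent boundary conditions give `D₂ [p (φ' ψ - ψ' φ)](z₂) = (λ - μ) B φ B ψ`
with `B u = c₂ u(z₂) - d₂ (p u')(z₂)`, and dividing by `(μ - λ) D₂` yields the relation.
-/

namespace SturmLiouville

noncomputable def lagrangeBracket (p φ ψ : ℝ → ℝ) (z : ℝ) : ℝ :=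
  p z * deriv φ z * ψ z - p z * deriv ψ z * φ z

theorem hasDerivAt_lagrangeBracket {p φ ψ : ℝ → ℝ} {z : ℝ}
    (hpφ : DifferentiableAt ℝ (fun x => p x * deriv φ x) z)
    (hpψ : DifferentiableAt ℝ (fun x => p x * deriv ψ x) z)
    (hφ : DifferentiableAt ℝ φ z) (hψ : DifferentiableAt ℝ ψ z) :
    HasDerivAt (lagrangeBracket p φ ψ)
      (deriv (fun x => p x * deriv φ x) z * ψ z - deriv (fun x => p x * deriv ψ x) z * φ z) z :=
  ((hpφ.hasDerivAt.mul hψ.hasDerivAt).sub (hpψ.hasDerivAt.mul hφ.hasDerivAt)).congr_deriv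
    (by ring)

theorem integral_eq_lagrangeBracket_sub {p φ ψ : ℝ → ℝ} (a b : ℝ)
    (hp : ContDiff ℝ 1 p) (hφ : ContDiff ℝ 2 φ) (hψ : ContDiff ℝ 2 ψ) :
    ∫ z in a..b,
        (deriv (fun x => p x * deriv φ x) z * ψ z - deriv (fun x => p x * deriv ψ x) z * φ z)
      = lagrangeBracket p φ ψ b - lagrangeBracket p φ ψ a := by
  have hpφ : ContDiff ℝ 1 (fun x => p x * deriv φ x) := hp.mul (hφ.iterate_deriv' 1 1)
  have hpψ : ContDiff ℝ 1 (fun x => p x * deriv ψ x) := hp.mul (hψ.iterate_deriv' 1 1)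
  have hφ₁ : Differentiable ℝ φ := hφ.differentiable (by norm_num)
  have hψ₁ : Differentiable ℝ ψ := hψ.differentiable (by norm_num)
  refine intervalIntegral.integral_eq_sub_of_hasDerivAt (fun z _ =>
    hasDerivAt_lagrangeBracket (hpφ.differentiable one_ne_zero z)
      (hpψ.differentiable one_ne_zero z) (hφ₁ z) (hψ₁ z)) ?_
  exact (((hpφ.continuous_deriv le_rfl).mul hψ₁.continuous).sub
    ((hpψ.continuous_deriv le_rfl).mul hφ₁.continuous)).intervalIntegrable a b

theorem sub_mul_integral_eq_lagrangeBracket_sub_of_eigen {p q r φ ψ : ℝ → ℝ}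
    {lam mu z₁ z₂ : ℝ} (hz : z₁ ≤ z₂)
    (hp : ContDiff ℝ 1 p) (hφ : ContDiff ℝ 2 φ) (hψ : ContDiff ℝ 2 ψ)
    (heqφ : ∀ z ∈ Icc z₁ z₂,
      -(deriv (fun x => p x * deriv φ x) z) + q z * φ z = lam * r z * φ z)
    (heqψ : ∀ z ∈ Icc z₁ z₂,
      -(deriv (fun x => p x * deriv ψ x) z) + q z * ψ z = mu * r z * ψ z) :
    (mu - lam) * ∫ z in z₁..z₂, φ z * ψ z * r z
      = lagrangeBracket p φ ψ z₂ - lagrangeBracket p φ ψ z₁ := by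
  rw [← intervalIntegral.integral_const_mul, ← integral_eq_lagrangeBracket_sub z₁ z₂ hp hφ hψ]
  refine intervalIntegral.integral_congr fun z hzI => ?_
  rw [uIcc_of_le hz] at hzI
  linear_combination ψ z * heqφ z hzI - φ z * heqψ z hzI

theorem mul_sub_mul_eq_zero_of_pair_ne_zero {K : Type*} [Field K] {a b x y u v : K}
    (hab : (a, b) ≠ (0, 0)) (hxy : a * x - b * y = 0) (huv : a * u - b * v = 0) :
    y * u - v * x = 0 := by
  by_cases ha : a = 0
  · have hb : b ≠ 0 := fun hb => hab (by rw [ha, hb])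
    have h : b * (y * u - v * x) = 0 := by linear_combination x * huv - u * hxy
    exact (mul_eq_zero.mp h).resolve_left hb
  · have h : a * (y * u - v * x) = 0 := by linear_combination y * huv - v * hxy
    exact (mul_eq_zero.mp h).resolve_left ha

theorem lagrangeBracket_eq_zero_of_boundary {p φ ψ : ℝ → ℝ} {a b z : ℝ}
    (hab : (a, b) ≠ (0, 0))
    (hφ : a * φ z - b * (p z * deriv φ z) = 0) (hψ : a * ψ z - b * (p z * deriv ψ z) = 0) :
    lagrangeBracket p φ ψ z = 0 := by
  unfold lagrangeBracket
  linear_combination mul_sub_mul_eq_zero_of_pair_ne_zero hab hφ hψ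

theorem det_mul_lagrangeBracket_of_eigenBoundary {p φ ψ : ℝ → ℝ} {lam mu a b c d z : ℝ}
    (hφ : -(a * φ z - b * (p z * deriv φ z)) = lam * (c * φ z - d * (p z * deriv φ z)))
    (hψ : -(a * ψ z - b * (p z * deriv ψ z)) = mu * (c * ψ z - d * (p z * deriv ψ z))) :
    -(a * d - b * c) * lagrangeBracket p φ ψ z
      = (lam - mu) * (c * φ z - d * (p z * deriv φ z)) * (c * ψ z - d * (p z * deriv ψ z)) := by
  unfold lagrangeBracket
  linear_combination (c * ψ z - d * (p z * deriv ψ z)) * hφ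
    - (c * φ z - d * (p z * deriv φ z)) * hψ

end SturmLiouville

open SturmLiouville in
theorem orthogonality_with_boundary_term_general (z₁ z₂ : ℝ) (hz : z₁ < z₂)
    (p q r φ ψ : ℝ → ℝ) (lam mu a₁ b₁ a₂ b₂ c₂ d₂ D₂ : ℝ)
    (hp : ContDiff ℝ 1 p)
    (hφ : ContDiff ℝ 2 φ) (hψ : ContDiff ℝ 2 ψ)
    (heqφ : ∀ z ∈ Icc z₁ z₂,
      -(deriv (fun x => p x * deriv φ x) z) + q z * φ z = lam * r z * φ z)
    (heqψ : ∀ z ∈ Icc z₁ z₂,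
      -(deriv (fun x => p x * deriv ψ x) z) + q z * ψ z = mu * r z * ψ z)
    (hab : (a₁, b₁) ≠ (0, 0))
    (hbc1φ : a₁ * φ z₁ - b₁ * (p z₁ * deriv φ z₁) = 0)
    (hbc1ψ : a₁ * ψ z₁ - b₁ * (p z₁ * deriv ψ z₁) = 0)
    (hbc2φ : -(a₂ * φ z₂ - b₂ * (p z₂ * deriv φ z₂))
      = lam * (c₂ * φ z₂ - d₂ * (p z₂ * deriv φ z₂)))
    (hbc2ψ : -(a₂ * ψ z₂ - b₂ * (p z₂ * deriv ψ z₂))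
      = mu * (c₂ * ψ z₂ - d₂ * (p z₂ * deriv ψ z₂)))
    (hD : D₂ = -(a₂ * d₂ - b₂ * c₂)) (hD0 : D₂ ≠ 0) (hlm : lam ≠ mu) :
    (∫ z in z₁..z₂, φ z * ψ z * r z)
      + D₂⁻¹ * (c₂ * φ z₂ - d₂ * (p z₂ * deriv φ z₂))
          * (c₂ * ψ z₂ - d₂ * (p z₂ * deriv ψ z₂)) = 0 := by
  have hgreen := sub_mul_integral_eq_lagrangeBracket_sub_of_eigen hz.le hp hφ hψ heqφ heqψ
  rw [lagrangeBracket_eq_zero_of_boundary hab hbc1φ hbc1ψ, sub_zero] at hgreen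
  have hright := det_mul_lagrangeBracket_of_eigenBoundary (p := p) hbc2φ hbc2ψ
  rw [← hD] at hright
  have hscaled : (D₂ * (mu - lam)) * ((∫ z in z₁..z₂, φ z * ψ z * r z)
      + D₂⁻¹ * (c₂ * φ z₂ - d₂ * (p z₂ * deriv φ z₂))
          * (c₂ * ψ z₂ - d₂ * (p z₂ * deriv ψ z₂))) = 0 := by
    field_simp
    linear_combination D₂ * hgreen + hright
  exact (mul_eq_zero.mp hscaled).resolve_left (mul_ne_zero hD0 (sub_ne_zero.mpr hlm.symm))

/-- Orthogonality relation (with boundary term) for eigenfunctions of a Sturm-Liouville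
problem with an eigenvalue-dependent boundary condition at `z₂`. -/
theorem orthogonality_with_boundary_term (z₁ z₂ : ℝ) (hz : z₁ < z₂)
    (p q r φ ψ : ℝ → ℝ) (lam mu a₁ b₁ a₂ b₂ c₂ d₂ D₂ : ℝ)
    (hp : ContDiff ℝ 1 p) (hppos : ∀ z ∈ Icc z₁ z₂, 0 < p z)
    (hq : ContinuousOn q (Icc z₁ z₂)) (hr : ContinuousOn r (Icc z₁ z₂))
    (hrpos : ∀ z ∈ Icc z₁ z₂, 0 < r z)
    (hφ : ContDiff ℝ 2 φ) (hψ : ContDiff ℝ 2 ψ)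
    (heqφ : ∀ z ∈ Icc z₁ z₂,
      -(deriv (fun x => p x * deriv φ x) z) + q z * φ z = lam * r z * φ z)
    (heqψ : ∀ z ∈ Icc z₁ z₂,
      -(deriv (fun x => p x * deriv ψ x) z) + q z * ψ z = mu * r z * ψ z)
    (hab : (a₁, b₁) ≠ (0, 0))
    (hbc1φ : a₁ * φ z₁ - b₁ * (p z₁ * deriv φ z₁) = 0)
    (hbc1ψ : a₁ * ψ z₁ - b₁ * (p z₁ * deriv ψ z₁) = 0)
    (hbc2φ : -(a₂ * φ z₂ - b₂ * (p z₂ * deriv φ z₂))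
      = lam * (c₂ * φ z₂ - d₂ * (p z₂ * deriv φ z₂)))
    (hbc2ψ : -(a₂ * ψ z₂ - b₂ * (p z₂ * deriv ψ z₂))
      = mu * (c₂ * ψ z₂ - d₂ * (p z₂ * deriv ψ z₂)))
    (hD : D₂ = -(a₂ * d₂ - b₂ * c₂)) (hD0 : D₂ ≠ 0) (hlm : lam ≠ mu) :
    (∫ z in z₁..z₂, φ z * ψ z * r z)
      + D₂⁻¹ * (c₂ * φ z₂ - d₂ * (p z₂ * deriv φ z₂))
          * (c₂ * ψ z₂ - d₂ * (p z₂ * deriv ψ z₂)) = 0 :=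
  orthogonality_with_boundary_term_general z₁ z₂ hz p q r φ ψ lam mu a₁ b₁ a₂ b₂ c₂ d₂ D₂ hp hφ hψ
    heqφ heqψ hab hbc1φ hbc1ψ hbc2φ hbc2ψ hD hD0 hlm
end

section
/- Let $\mathcal{A}$ be a compact self-adjoint positive operator on a Pontryagin space $\Pi_\kappa$ (an indefinite inner product space with a $\kappa$-dimensional maximal negative subspace), such that $0$ is not an eigenvalue of $\mathcal{A}$. Then every eigenvalue of $\mathcal{A}$ is real, eigenvectors corresponding to negative eigenvalues satisfy $\langle\phi,\phi\rangle < 0$, and eigenvectors corresponding to positive eigenvalues satisfy $\langle\phi,\phi\rangle > 0$. -/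
/-!
Read through the fundamental symmetry `J`, positivity of `A` for the indefinite form
`[x, y] = ⟪J x, y⟫` says that `J A` is a positive operator of the Hilbert space. If `A x = μ x`
with `x ≠ 0`, then `[A x, x] = conj μ · [x, x]` is a nonnegative real number while `[x, x]` is
real. A positive operator vanishes on every vector at which its quadratic form vanishes, so
`[x, x] = 0` would give `J A x = 0`, hence `A x = 0`; as `0` is not an eigenvalue, `[x, x] ≠ 0`.
Dividing by `[x, x]` shows that `μ` is real with the sign of `[x, x]`.
-/

open ComplexConjugate
open scoped ComplexOrder

namespace LinearMap

variable {𝕜 E : Type*} [RCLike 𝕜] [NormedAddCommGroup E] [InnerProductSpace 𝕜 E]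

theorem IsPositive.apply_eq_zero_of_inner_self_eq_zero {T : E →ₗ[𝕜] E} (hT : T.IsPositive)
    {x : E} (hx : inner 𝕜 (T x) x = 0) : T x = 0 := by
  -- Along `x - t • T x` the form is negative for small `t > 0` unless `T x = 0`.
  have hquad (t : ℝ) : RCLike.re (inner 𝕜 (T (x - (t : 𝕜) • T x)) (x - (t : 𝕜) • T x))
      = t ^ 2 * RCLike.re (inner 𝕜 (T (T x)) (T x)) - 2 * t * ‖T x‖ ^ 2 := by
    have hyx : inner 𝕜 (T (T x)) x = inner 𝕜 (T x) (T x) := hT.isSymmetric (T x) x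
    simp only [map_sub, map_smul, inner_sub_left, inner_sub_right, inner_smul_left,
      inner_smul_right, RCLike.conj_ofReal, hx, hyx, inner_self_eq_norm_sq_to_K,
      RCLike.re_ofReal_mul, ← RCLike.ofReal_pow, RCLike.ofReal_re, map_zero]
    ring
  by_contra hne
  set a := ‖T x‖ ^ 2
  set b := RCLike.re (inner 𝕜 (T (T x)) (T x))
  have ha : 0 < a := by positivity
  have hb : 0 ≤ b := hT.re_inner_nonneg_left (T x)
  set t := a / (b + 1)
  have ht : t * (b + 1) = a := div_mul_cancel₀ a (by positivity)
  have htpos : 0 < t := by positivity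
  have hnonneg := hT.re_inner_nonneg_left (x - (t : 𝕜) • T x)
  rw [hquad] at hnonneg
  nlinarith [mul_pos htpos ha]

end LinearMap

theorem Complex.im_eq_zero_and_mul_re_nonneg_of_conj_mul_nonneg {μ : ℂ} {r : ℝ} (hr : r ≠ 0)
    (h : 0 ≤ conj μ * r) : μ.im = 0 ∧ 0 ≤ μ.re * r := by
  obtain ⟨hre, him⟩ := Complex.nonneg_iff.mp h
  simp only [Complex.mul_re, Complex.mul_im, Complex.conj_re, Complex.conj_im,
    Complex.ofReal_re, Complex.ofReal_im, mul_zero, sub_zero] at hre him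
  exact ⟨(mul_eq_zero.mp (by linarith : μ.im * r = 0)).resolve_right hr, hre⟩

theorem pontryagin_positive_compact_eigen_general
    {E : Type*} [NormedAddCommGroup E] [InnerProductSpace ℂ E]
    (J A : E →L[ℂ] E)
    (hJsym : ∀ x y : E, (inner ℂ (J x) y : ℂ) = inner ℂ x (J y))
    (hJ2 : ∀ x : E, J (J x) = x)
    (hAsa : ∀ x y : E, (inner ℂ (J (A x)) y : ℂ) = inner ℂ (J x) (A y))
    (hApos : ∀ x : E, 0 ≤ (inner ℂ (J (A x)) x : ℂ).re ∧ (inner ℂ (J (A x)) x : ℂ).im = 0)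
    (hA0 : ∀ x : E, A x = 0 → x = 0) :
    ∀ (mu : ℂ) (x : E), x ≠ 0 → A x = mu • x →
      mu.im = 0
      ∧ (mu.re < 0 → (inner ℂ (J x) x : ℂ).re < 0)
      ∧ (0 < mu.re → 0 < (inner ℂ (J x) x : ℂ).re) := by
  intro mu x hx hAx
  have hJA : ((J ∘L A : E →L[ℂ] E) : E →ₗ[ℂ] E).IsPositive :=
    ⟨fun u v ↦ show inner ℂ (J (A u)) v = inner ℂ u (J (A v)) by rw [hAsa, hJsym],
      fun u ↦ (hApos u).1⟩
  set r := (inner ℂ (J x) x : ℂ).re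
  have hr : (r : ℂ) = inner ℂ (J x) x :=
    LinearMap.IsSymmetric.coe_re_inner_apply_self (T := (J : E →ₗ[ℂ] E)) hJsym x
  have hform : inner ℂ (J (A x)) x = conj mu * r := by
    rw [hAx, map_smul, inner_smul_left, hr]
  have hr0 : r ≠ 0 := by
    intro h
    refine hx (hA0 x ?_)
    have hJAx : J (A x) = 0 :=
      hJA.apply_eq_zero_of_inner_self_eq_zero (by simpa [h] using hform)
    rw [← hJ2 (A x), hJAx, map_zero]
  obtain ⟨him, hsign⟩ := Complex.im_eq_zero_and_mul_re_nonneg_of_conj_mul_nonneg hr0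
    (hform ▸ Complex.nonneg_iff.mpr ⟨(hApos x).1, (hApos x).2.symm⟩)
  refine ⟨him, fun hmu ↦ ?_, fun hmu ↦ ?_⟩
  · exact lt_of_le_of_ne (nonpos_of_mul_nonneg_right hsign hmu) hr0
  · exact lt_of_le_of_ne (nonneg_of_mul_nonneg_right hsign hmu) hr0.symm

/-- A positive compact self-adjoint operator on a Pontryagin space (modelled as a Hilbert
space `E` with fundamental symmetry `J`, the indefinite inner product being `⟪J x, y⟫`,
whose negative subspace — the `(-1)`-eigenspace of `J` — has dimension `κ`), with `0` not
an eigenvalue, has only real eigenvalues; eigenvectors of negative eigenvalues have negative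
indefinite self-product and those of positive eigenvalues have positive self-product. -/
theorem pontryagin_positive_compact_eigen
    {E : Type*} [NormedAddCommGroup E] [InnerProductSpace ℂ E] [CompleteSpace E]
    (J A : E →L[ℂ] E) (κ : ℕ)
    (hJsym : ∀ x y : E, (inner ℂ (J x) y : ℂ) = inner ℂ x (J y))
    (hJ2 : ∀ x : E, J (J x) = x)
    (hκ : Module.finrank ℂ (Module.End.eigenspace (J : E →ₗ[ℂ] E) (-1)) = κ)
    (hAcompact : IsCompactOperator A)
    (hAsa : ∀ x y : E, (inner ℂ (J (A x)) y : ℂ) = inner ℂ (J x) (A y))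
    (hApos : ∀ x : E, 0 ≤ (inner ℂ (J (A x)) x : ℂ).re ∧ (inner ℂ (J (A x)) x : ℂ).im = 0)
    (hA0 : ∀ x : E, A x = 0 → x = 0) :
    ∀ (mu : ℂ) (x : E), x ≠ 0 → A x = mu • x →
      mu.im = 0
      ∧ (mu.re < 0 → (inner ℂ (J x) x : ℂ).re < 0)
      ∧ (0 < mu.re → 0 < (inner ℂ (J x) x : ℂ).re) :=
  pontryagin_positive_compact_eigen_general J A hJsym hJ2 hAsa hApos hA0
end

section
/- Let $\phi$ be a real $C^2$ eigenfunction with eigenvalue $\lambda$ of the problem $-(p\phi')'+q\phi=\lambda r\phi$ on $(z_1,z_2)$, with boundary conditions $b_1(p\phi')(z_1) = a_1\phi(z_1)$ and $-[a_2\phi(z_2)-b_2(p\phi')(z_2)] = \lambda[c_2\phi(z_2)-d_2(p\phi')(z_2)]$, where $p>0$, $r>0$, $q\geq 0$, $a_1/b_1\geq 0$ (with $b_1\neq 0$), $D_2 = -(a_2d_2-b_2c_2)\neq 0$, $a_2c_2/D_2\leq 0$, $b_2d_2/D_2\leq 0$, and $a_2d_2/D_2\geq 0$. Then $\lambda\left[\int_{z_1}^{z_2}\phi^2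 r\,dz + D_2^{-1}(c_2\phi(z_2)-d_2(p\phi')(z_2))^2\right] \geq 0$. -/
/-!
Multiply the equation by `φ` and integrate by parts: with `g = p φ'`,
`λ ∫ φ² r = g(z₁) φ(z₁) - g(z₂) φ(z₂) + ∫ (p φ'² + q φ²)`.
The Robin condition at `z₁` makes `g(z₁) φ(z₁) = (a₁/b₁) φ(z₁)² ≥ 0`. At `z₂` the
eigenvalue-dependent condition turns `λ D₂⁻¹ (c₂ φ - d₂ g)² - g φ` into the binary quadratic form
`α φ² + 2β φ g + γ g²` with `α = -a₂c₂/D₂`, `β = a₂d₂/D₂`, `γ = -b₂d₂/D₂`, all nonnegative, and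
`αγ = β² + β ≥ β²`, so the form is positive semidefinite. Adding up, `λ` times the Pontryagin
norm equals the nonnegative Dirichlet form.
-/

open MeasureTheory Set

theorem quadratic_form_nonneg {α β γ : ℝ} (hα : 0 ≤ α) (hγ : 0 ≤ γ) (hβ : β ^ 2 ≤ α * γ)
    (u v : ℝ) : 0 ≤ α * u ^ 2 + 2 * β * u * v + γ * v ^ 2 := by
  rcases hα.eq_or_lt with rfl | hα
  · obtain rfl : β = 0 := by nlinarith
    nlinarith
  · have key : α * (α * u ^ 2 + 2 * β * u * v + γ * v ^ 2)
        = (α * u + β * v) ^ 2 + (α * γ - β ^ 2) * v ^ 2 := by ring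
    refine (mul_nonneg_iff_of_pos_left hα).mp ?_
    rw [key]
    exact add_nonneg (sq_nonneg _) (mul_nonneg (by linarith) (sq_nonneg _))

theorem robin_flux_nonneg {a b x y : ℝ} (hb : b ≠ 0) (hab : 0 ≤ a / b) (h : b * y = a * x) :
    0 ≤ y * x := by
  have : y * x = a / b * x ^ 2 := by
    field_simp
    linear_combination x * h
  rw [this]
  positivity

theorem eigenvalue_boundary_form_nonneg {a b c d D lam u v : ℝ}
    (hD : D = -(a * d - b * c)) (hD0 : D ≠ 0)
    (hac : a * c / D ≤ 0) (hbd : b * d / D ≤ 0) (had : 0 ≤ a * d / D)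
    (hbc : -(a * u - b * v) = lam * (c * u - d * v)) :
    0 ≤ lam * (D⁻¹ * (c * u - d * v) ^ 2) - v * u := by
  have hβ : (a * d / D) ^ 2 ≤ (-(a * c / D)) * (-(b * d / D)) := by
    have : (-(a * c / D)) * (-(b * d / D)) = (a * d / D) ^ 2 + a * d / D := by
      field_simp
      linear_combination (-(a * d)) * hD
    linarith
  have hexp : lam * (D⁻¹ * (c * u - d * v) ^ 2) - v * u
      = -(a * c / D) * u ^ 2 + 2 * (a * d / D) * u * v + -(b * d / D) * v ^ 2 := by
    have hflux : lam * (D⁻¹ * (c * u - d * v) ^ 2) = D⁻¹ * (c * u - d * v) * -(a * u - b * v) := by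
      linear_combination (-(D⁻¹ * (c * u - d * v))) * hbc
    rw [hflux]
    field_simp
    linear_combination (-(u * v)) * hD
  rw [hexp]
  exact quadratic_form_nonneg (by linarith) (by linarith) hβ u v

theorem integral_eigenfunction_sq_mul_weight {z₁ z₂ lam : ℝ} {p q r φ : ℝ → ℝ} (hz : z₁ ≤ z₂)
    (hp : ContDiff ℝ 1 p) (hq : ContinuousOn q (Icc z₁ z₂)) (hφ : ContDiff ℝ 2 φ)
    (heq : ∀ z ∈ Icc z₁ z₂,
      -(deriv (fun x => p x * deriv φ x) z) + q z * φ z = lam * r z * φ z) :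
    lam * ∫ z in z₁..z₂, φ z ^ 2 * r z
      = p z₁ * deriv φ z₁ * φ z₁ - p z₂ * deriv φ z₂ * φ z₂
        + ∫ z in z₁..z₂, (p z * deriv φ z ^ 2 + q z * φ z ^ 2) := by
  set g : ℝ → ℝ := fun x => p x * deriv φ x with hg_def
  have hφ' : ContDiff ℝ 1 (deriv φ) := hφ.deriv'
  have hg : ContDiff ℝ 1 g := hp.mul hφ'
  have hIcc : uIcc z₁ z₂ = Icc z₁ z₂ := uIcc_of_le hz
  have hqφ : IntervalIntegrable (fun z => q z * φ z ^ 2) volume z₁ z₂ :=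
    (hq.mul (hφ.continuous.pow 2).continuousOn).intervalIntegrable_of_Icc hz
  have hg'φ : IntervalIntegrable (fun z => -(deriv g z * φ z)) volume z₁ z₂ :=
    ((hg.continuous_deriv le_rfl).mul hφ.continuous).neg.intervalIntegrable _ _
  have hgφ' : IntervalIntegrable (fun z => g z * deriv φ z) volume z₁ z₂ :=
    (hg.continuous.mul hφ'.continuous).intervalIntegrable _ _
  have hparts : ∫ z in z₁..z₂, g z * deriv φ z
      = g z₂ * φ z₂ - g z₁ * φ z₁ - ∫ z in z₁..z₂, deriv g z * φ z :=
    intervalIntegral.integral_mul_deriv_eq_deriv_mul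
      (fun x _ => (hg.differentiable one_ne_zero x).hasDerivAt)
      (fun x _ => (hφ.differentiable (by norm_num) x).hasDerivAt)
      ((hg.continuous_deriv le_rfl).intervalIntegrable _ _) (hφ'.continuous.intervalIntegrable _ _)
  calc lam * ∫ z in z₁..z₂, φ z ^ 2 * r z
      = ∫ z in z₁..z₂, (-(deriv g z * φ z) + q z * φ z ^ 2) := by
        rw [← intervalIntegral.integral_const_mul]
        refine intervalIntegral.integral_congr fun z hz' => ?_
        rw [hIcc] at hz'
        linear_combination (-(φ z)) * heq z hz'
    _ = g z₁ * φ z₁ - g z₂ * φ z₂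
        + ((∫ z in z₁..z₂, g z * deriv φ z) + ∫ z in z₁..z₂, q z * φ z ^ 2) := by
        rw [intervalIntegral.integral_add hg'φ hqφ, intervalIntegral.integral_neg, hparts]
        ring
    _ = _ := by
        rw [← intervalIntegral.integral_add hgφ' hqφ]
        simp only [hg_def, pow_two, mul_assoc]

theorem left_definite_sign_general (z₁ z₂ : ℝ) (hz : z₁ < z₂)
    (p q r φ : ℝ → ℝ) (lam a₁ b₁ a₂ b₂ c₂ d₂ D₂ : ℝ)
    (hp : ContDiff ℝ 1 p) (hppos : ∀ z ∈ Icc z₁ z₂, 0 < p z)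
    (hq : ContinuousOn q (Icc z₁ z₂)) (hqnn : ∀ z ∈ Icc z₁ z₂, 0 ≤ q z)
    (hφ : ContDiff ℝ 2 φ)
    (heq : ∀ z ∈ Icc z₁ z₂,
      -(deriv (fun x => p x * deriv φ x) z) + q z * φ z = lam * r z * φ z)
    (hb₁ : b₁ ≠ 0) (hab₁ : 0 ≤ a₁ / b₁)
    (hbc1 : b₁ * (p z₁ * deriv φ z₁) = a₁ * φ z₁)
    (hbc2 : -(a₂ * φ z₂ - b₂ * (p z₂ * deriv φ z₂))
      = lam * (c₂ * φ z₂ - d₂ * (p z₂ * deriv φ z₂)))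
    (hD : D₂ = -(a₂ * d₂ - b₂ * c₂)) (hD0 : D₂ ≠ 0)
    (hac : a₂ * c₂ / D₂ ≤ 0) (hbd : b₂ * d₂ / D₂ ≤ 0) (had : 0 ≤ a₂ * d₂ / D₂) :
    0 ≤ lam * ((∫ z in z₁..z₂, (φ z) ^ 2 * r z)
      + D₂⁻¹ * (c₂ * φ z₂ - d₂ * (p z₂ * deriv φ z₂)) ^ 2) := by
  have henergy := integral_eigenfunction_sq_mul_weight hz.le hp hq hφ heq
  have hleft := robin_flux_nonneg hb₁ hab₁ hbc1
  have hright := eigenvalue_boundary_form_nonneg hD hD0 hac hbd had hbc2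
  have hdirichlet : 0 ≤ ∫ z in z₁..z₂, (p z * deriv φ z ^ 2 + q z * φ z ^ 2) :=
    intervalIntegral.integral_nonneg hz.le fun z hz' =>
      add_nonneg (mul_nonneg (hppos z hz').le (sq_nonneg _)) (mul_nonneg (hqnn z hz') (sq_nonneg _))
  rw [mul_add, henergy]
  linarith

/-- Left-definiteness: under the sign conditions on the boundary coefficients, the
eigenvalue and the Pontryagin squared norm of the eigenfunction have the same sign. -/
theorem left_definite_sign (z₁ z₂ : ℝ) (hz : z₁ < z₂)
    (p q r φ : ℝ → ℝ) (lam a₁ b₁ a₂ b₂ c₂ d₂ D₂ : ℝ)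
    (hp : ContDiff ℝ 1 p) (hppos : ∀ z ∈ Icc z₁ z₂, 0 < p z)
    (hq : ContinuousOn q (Icc z₁ z₂)) (hqnn : ∀ z ∈ Icc z₁ z₂, 0 ≤ q z)
    (hr : ContinuousOn r (Icc z₁ z₂)) (hrpos : ∀ z ∈ Icc z₁ z₂, 0 < r z)
    (hφ : ContDiff ℝ 2 φ)
    (heq : ∀ z ∈ Icc z₁ z₂,
      -(deriv (fun x => p x * deriv φ x) z) + q z * φ z = lam * r z * φ z)
    (hb₁ : b₁ ≠ 0) (hab₁ : 0 ≤ a₁ / b₁)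
    (hbc1 : b₁ * (p z₁ * deriv φ z₁) = a₁ * φ z₁)
    (hbc2 : -(a₂ * φ z₂ - b₂ * (p z₂ * deriv φ z₂))
      = lam * (c₂ * φ z₂ - d₂ * (p z₂ * deriv φ z₂)))
    (hD : D₂ = -(a₂ * d₂ - b₂ * c₂)) (hD0 : D₂ ≠ 0)
    (hac : a₂ * c₂ / D₂ ≤ 0) (hbd : b₂ * d₂ / D₂ ≤ 0) (had : 0 ≤ a₂ * d₂ / D₂) :
    0 ≤ lam * ((∫ z in z₁..z₂, (φ z) ^ 2 * r z)
      + D₂⁻¹ * (c₂ * φ z₂ - d₂ * (p z₂ * deriv φ z₂)) ^ 2) :=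
  left_definite_sign_general z₁ z₂ hz p q r φ lam a₁ b₁ a₂ b₂ c₂ d₂ D₂ hp hppos hq hqnn hφ heq hb₁
    hab₁ hbc1 hbc2 hD hD0 hac hbd had
end

section
/- Let $H$ be a Hilbert space and $\{\Phi_n\}_{n\geq 0}$ an orthonormal basis of $H = L^2\oplus\mathbb{C}$ where each $\Phi_n = (\phi_n,\beta_n)$. Then the family $\{\phi_n\}_{n\geq 0}$ of $L^2$-components is complete in $L^2$ (its closed span is all of $L^2$) but is not a basis of $L^2$: it is overcomplete, i.e., there exist coefficients $(c_n)$, not all zero, with $\sum_n c_n\phi_n = 0$ in $L^2$. -/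
/-!
Projection onto the first factor is a continuous surjection `E ⊕ ℂ → E`, so it maps the dense
span of the basis onto a dense subspace of `E`. Its kernel contains `z = (0, 1) ≠ 0`; applying the
projection to the expansion `z = ∑ ⟪Φ n, z⟫ Φ n` gives `0 = ∑ ⟪Φ n, z⟫ φ n`, and the coefficients
do not all vanish because `z ≠ 0`.
-/

open Set

theorem Submodule.topologicalClosure_span_range_comp_eq_top
    {R M N ι : Type*} [Semiring R]
    [AddCommMonoid M] [Module R M] [TopologicalSpace M] [ContinuousAdd M] [ContinuousConstSMul R M]
    [AddCommMonoid N] [Module R N] [TopologicalSpace N] [ContinuousAdd N] [ContinuousConstSMul R N]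
    {v : ι → M} (hv : (span R (range v)).topologicalClosure = ⊤)
    (f : M →L[R] N) (hf : Function.Surjective f) :
    (span R (range (f ∘ v))).topologicalClosure = ⊤ := by
  rw [← dense_iff_topologicalClosure_eq_top] at hv ⊢
  rw [range_comp, ← ContinuousLinearMap.coe_coe, ← map_span]
  exact hf.denseRange.dense_image f.continuous hv

namespace HilbertBasis

variable {ι 𝕜 H F : Type*} [RCLike 𝕜] [NormedAddCommGroup H] [InnerProductSpace 𝕜 H]
  [AddCommMonoid F] [Module 𝕜 F] [TopologicalSpace F]

theorem hasSum_repr_smul_map (b : HilbertBasis ι 𝕜 H) (f : H →L[𝕜] F) (x : H) :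
    HasSum (fun i => b.repr x i • f (b i)) (f x) := by
  simpa only [map_smul] using (b.hasSum_repr x).mapL f

theorem exists_ne_zero_hasSum_smul_map_eq_zero (b : HilbertBasis ι 𝕜 H) (f : H →L[𝕜] F)
    {x : H} (hx : x ≠ 0) (hfx : f x = 0) :
    ∃ c : ι → 𝕜, c ≠ 0 ∧ HasSum (fun i => c i • f (b i)) 0 := by
  refine ⟨fun i => b.repr x i, fun hc => hx ?_, hfx ▸ b.hasSum_repr_smul_map f x⟩
  exact b.repr.map_eq_zero_iff.mp (lp.ext hc)

end HilbertBasis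

theorem first_components_complete_but_overcomplete_general
    {E : Type*} [NormedAddCommGroup E] [InnerProductSpace ℂ E]
    (b : HilbertBasis ℕ ℂ (WithLp 2 (E × ℂ))) :
    (Submodule.span ℂ
        (Set.range fun n => (WithLp.equiv 2 (E × ℂ) (b n)).1)).topologicalClosure = ⊤
    ∧ ∃ c : ℕ → ℂ, c ≠ 0 ∧
        HasSum (fun n => c n • (WithLp.equiv 2 (E × ℂ) (b n)).1) (0 : E) := by
  let P : WithLp 2 (E × ℂ) →L[ℂ] E :=
    (ContinuousLinearMap.fst ℂ E ℂ).comp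
      (WithLp.prodContinuousLinearEquiv 2 ℂ E ℂ).toContinuousLinearMap
  have hP : Function.Surjective P := fun x => ⟨WithLp.toLp 2 (x, 0), rfl⟩
  have hz : WithLp.toLp 2 ((0 : E), (1 : ℂ)) ≠ 0 := fun h => by
    simpa using congrArg (fun w : WithLp 2 (E × ℂ) => w.snd) h
  exact ⟨Submodule.topologicalClosure_span_range_comp_eq_top b.dense_span P hP,
    b.exists_ne_zero_hasSum_smul_map_eq_zero P hz rfl⟩

/-- If `{Φ n}` is an orthonormal (Hilbert) basis of `H = L² ⊕ ℂ` (the `ℓ²` product of a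
Hilbert space `E` with `ℂ`), with `Φ n = (φ n, β n)`, then the family of first
components `{φ n}` is complete in `E` (its closed span is everything) but
overcomplete: some nontrivial combination of the `φ n` sums to `0`. -/
theorem first_components_complete_but_overcomplete
    {E : Type*} [NormedAddCommGroup E] [InnerProductSpace ℂ E] [CompleteSpace E]
    (b : HilbertBasis ℕ ℂ (WithLp 2 (E × ℂ))) :
    (Submodule.span ℂ
        (Set.range fun n => (WithLp.equiv 2 (E × ℂ) (b n)).1)).topologicalClosure = ⊤
    ∧ ∃ c : ℕ → ℂ, c ≠ 0 ∧
        HasSum (fun n => c n • (WithLp.equiv 2 (E × ℂ) (b n)).1) (0 : E) :=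
  first_components_complete_but_overcomplete_general b
end
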